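/- Define λ(t) = (y(t)·(A y(t)))/|y(t)|² and v(t) = y(t)/|y(t)| for t ∈ [t₀, T*). Then the integral ∫_{t₀}^{T*} H(y(τ)) |A v(τ) − λ(τ) v(τ)|² dτ is finite. -/

import Mathlib

/-!
Along the flow the Rayleigh quotient `λ = ⟪y, A y⟫ / ‖y‖²` satisfies
`λ' = -2 H(y) ‖A v - λ v‖² + 2 ⟪A v - λ v, f⟫ / ‖y‖`, and `λ` stays between the smallest and
largest eigenvalue of `A`, so the integral is finite as soon as the forcing term
`⟪A v - λ v, f⟫ / ‖y‖ = O(‖y‖ ^ (δ - α))` is integrable. Near `T*` the drift dominates the forcing,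
`(‖y‖ ^ δ)' ≤ -c ‖y‖ ^ (δ - α)` with `c > 0`, so `λ + K ‖y‖ ^ δ` is, for large `K`, a function
bounded from below whose derivative is at most `-2 H(y) ‖A v - λ v‖²`. Away from `T*` the
integrand is continuous on a compact interval.
-/

open Set Real Filter Topology MeasureTheory

noncomputable section

/-- The action of an `n × n` real matrix on `EuclideanSpace ℝ (Fin n)` by
matrix-vector multiplication. -/
def mulVecE {n : ℕ} (A : Matrix (Fin n) (Fin n) ℝ) (x : EuclideanSpace ℝ (Fin n)) :
    EuclideanSpace ℝ (Fin n) :=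
  WithLp.toLp 2 (A.mulVec x)

open scoped RealInnerProductSpace

section Homogeneous

variable {E : Type*} [NormedAddCommGroup E] [NormedSpace ℝ E] {φ : E → ℝ} {p : ℝ}

theorem inv_norm_smul_mem_sphere {x : E} (hx : x ≠ 0) : ‖x‖⁻¹ • x ∈ Metric.sphere (0 : E) 1 := by
  simp [norm_smul, hx]

theorem eq_norm_rpow_mul_of_homogeneous
    (hφ : ∀ x : E, x ≠ 0 → ∀ s : ℝ, 0 < s → φ (s • x) = s ^ p * φ x) {x : E} (hx : x ≠ 0) :
    φ x = ‖x‖ ^ p * φ (‖x‖⁻¹ • x) := by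
  have hr : 0 < ‖x‖ := norm_pos_iff.mpr hx
  conv_lhs => rw [← smul_inv_smul₀ hr.ne' x]
  exact hφ _ (smul_ne_zero (inv_ne_zero hr.ne') hx) _ hr

theorem continuousOn_compl_zero_of_homogeneous
    (hφ : ∀ x : E, x ≠ 0 → ∀ s : ℝ, 0 < s → φ (s • x) = s ^ p * φ x)
    (hcont : ContinuousOn φ (Metric.sphere 0 1)) : ContinuousOn φ {0}ᶜ := by
  have hnorm : ∀ x ∈ ({0}ᶜ : Set E), ‖x‖ ≠ 0 := fun x hx => norm_ne_zero_iff.mpr hx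
  refine ContinuousOn.congr ?_ fun x hx => eq_norm_rpow_mul_of_homogeneous hφ hx
  refine (continuous_norm.continuousOn.rpow_const fun x hx => Or.inl (hnorm x hx)).mul ?_
  exact hcont.comp ((continuous_norm.continuousOn.inv₀ hnorm).smul continuousOn_id)
    fun x hx => inv_norm_smul_mem_sphere hx

theorem exists_pos_mul_norm_rpow_le_of_homogeneous [ProperSpace E]
    (hφ : ∀ x : E, x ≠ 0 → ∀ s : ℝ, 0 < s → φ (s • x) = s ^ p * φ x)
    (hpos : ∀ x : E, ‖x‖ = 1 → 0 < φ x) (hcont : ContinuousOn φ (Metric.sphere 0 1)) :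
    ∃ m > 0, ∀ x : E, x ≠ 0 → m * ‖x‖ ^ p ≤ φ x := by
  obtain ⟨m, hm, hle⟩ := (isCompact_sphere (0 : E) 1).exists_forall_le' hcont
    fun x hx => hpos x (mem_sphere_zero_iff_norm.mp hx)
  refine ⟨m, hm, fun x hx => ?_⟩
  rw [eq_norm_rpow_mul_of_homogeneous hφ hx, mul_comm]
  gcongr
  exact hle _ (inv_norm_smul_mem_sphere hx)

end Homogeneous

namespace ContinuousLinearMap

variable {E : Type*} [NormedAddCommGroup E] [InnerProductSpace ℝ E] (T : E →L[ℝ] E)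

def rayleighResidual (x : E) : E := T x - T.rayleighQuotient x • x

theorem rayleighQuotient_eq_inner (x : E) : T.rayleighQuotient x = ⟪T x, x⟫ / ‖x‖ ^ 2 := rfl

theorem continuousOn_rayleighQuotient : ContinuousOn T.rayleighQuotient {0}ᶜ :=
  T.reApplyInnerSelf_continuous.continuousOn.div (continuous_norm.pow 2).continuousOn
    fun _ hx => pow_ne_zero 2 (norm_ne_zero_iff.mpr hx)

theorem rayleighQuotient_inv_norm_smul (x : E) :
    T.rayleighQuotient (‖x‖⁻¹ • x) = T.rayleighQuotient x := by
  rcases eq_or_ne x 0 with rfl | hx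
  · simp
  · exact T.rayleigh_smul x (inv_ne_zero (norm_ne_zero_iff.mpr hx))

theorem inner_rayleighResidual_self (x : E) : ⟪T.rayleighResidual x, x⟫ = 0 := by
  rcases eq_or_ne x 0 with rfl | hx
  · simp
  · rw [rayleighResidual, inner_sub_left, real_inner_smul_left, real_inner_self_eq_norm_sq,
      rayleighQuotient_eq_inner]
    field_simp
    ring

theorem inner_rayleighResidual_apply (x : E) :
    ⟪T.rayleighResidual x, T x⟫ = ‖T.rayleighResidual x‖ ^ 2 := by
  have h : ⟪T.rayleighResidual x, T.rayleighResidual x⟫ =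
      ⟪T.rayleighResidual x, T x⟫ - T.rayleighQuotient x * ⟪T.rayleighResidual x, x⟫ := by
    rw [← real_inner_smul_right, ← inner_sub_right, rayleighResidual]
  rw [← real_inner_self_eq_norm_sq, h, inner_rayleighResidual_self, mul_zero, sub_zero]

theorem rayleighResidual_smul (x : E) (c : ℝ) :
    T.rayleighResidual (c • x) = c • T.rayleighResidual x := by
  rcases eq_or_ne c 0 with rfl | hc
  · simp [rayleighResidual]
  · rw [rayleighResidual, rayleighResidual, T.rayleigh_smul x hc, map_smul, smul_sub, smul_comm]

theorem norm_rayleighResidual_le (x : E) : ‖T.rayleighResidual x‖ ≤ 2 * ‖T‖ * ‖x‖ := by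
  calc ‖T.rayleighResidual x‖ ≤ ‖T x‖ + |T.rayleighQuotient x| * ‖x‖ := by
        rw [rayleighResidual, ← Real.norm_eq_abs, ← norm_smul]; exact norm_sub_le _ _
    _ ≤ ‖T‖ * ‖x‖ + ‖T‖ * ‖x‖ := by
        gcongr
        · exact T.le_opNorm x
        · exact T.rayleighQuotient_le_norm x
    _ = 2 * ‖T‖ * ‖x‖ := by ring

theorem continuousOn_rayleighResidual : ContinuousOn T.rayleighResidual {0}ᶜ :=
  T.continuous.continuousOn.sub (T.continuousOn_rayleighQuotient.smul continuousOn_id)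

end ContinuousLinearMap

section Calculus

variable {E : Type*} [NormedAddCommGroup E] [InnerProductSpace ℝ E] {y : ℝ → E} {y' : E} {t : ℝ}

theorem HasDerivAt.norm_rpow (hy : HasDerivAt y y' t) (h0 : y t ≠ 0) (p : ℝ) :
    HasDerivAt (fun s => ‖y s‖ ^ p) (p * ‖y t‖ ^ (p - 2) * ⟪y t, y'⟫) t := by
  have hsq : ∀ (x : E) (q : ℝ), (‖x‖ ^ 2) ^ (q / 2) = ‖x‖ ^ q := fun x q => by
    rw [← rpow_natCast, ← rpow_mul (norm_nonneg x)]; ring_nf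
  have h := hy.norm_sq.rpow_const (p := p / 2) (Or.inl (pow_ne_zero 2 (norm_ne_zero_iff.mpr h0)))
  simp only [hsq] at h
  refine h.congr_deriv ?_
  rw [show p / 2 - 1 = (p - 2) / 2 by ring, hsq]
  ring

theorem HasDerivAt.rayleighQuotient {T : E →L[ℝ] E} (hT : (T : E →ₗ[ℝ] E).IsSymmetric)
    (hy : HasDerivAt y y' t) (h0 : y t ≠ 0) :
    HasDerivAt (fun s => T.rayleighQuotient (y s))
      (2 * ⟪T.rayleighResidual (y t), y'⟫ / ‖y t‖ ^ 2) t := by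
  have hnum : HasDerivAt (fun s => ⟪T (y s), y s⟫) (2 * ⟪T (y t), y'⟫) t := by
    refine ((T.hasFDerivAt.comp_hasDerivAt t hy).inner ℝ hy).congr_deriv ?_
    have := hT y' (y t)
    simp only [ContinuousLinearMap.coe_coe] at this
    rw [this, Function.comp_apply, real_inner_comm y']
    ring
  refine (hnum.div hy.norm_sq (pow_ne_zero 2 (norm_ne_zero_iff.mpr h0))).congr_deriv ?_
  rw [ContinuousLinearMap.rayleighResidual, inner_sub_left, real_inner_smul_left,
    ContinuousLinearMap.rayleighQuotient_eq_inner]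
  field_simp

theorem hasDerivAt_rayleighQuotient_of_flow {T : E →L[ℝ] E} (hT : (T : E →ₗ[ℝ] E).IsSymmetric)
    {h : ℝ} {v : E} (hy : HasDerivAt y (-h • T (y t) + v) t) (h0 : y t ≠ 0) :
    HasDerivAt (fun s => T.rayleighQuotient (y s))
      (-2 * h * ‖T.rayleighResidual (‖y t‖⁻¹ • y t)‖ ^ 2 +
        2 * ⟪T.rayleighResidual (‖y t‖⁻¹ • y t), v⟫ / ‖y t‖) t := by
  refine (hy.rayleighQuotient hT h0).congr_deriv ?_
  rw [T.rayleighResidual_smul, norm_smul, real_inner_smul_left, inner_add_right,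
    real_inner_smul_right, T.inner_rayleighResidual_apply]
  have := norm_pos_iff.mpr h0
  simp only [norm_inv, norm_norm]
  field_simp

end Calculus

theorem integrableOn_Ioc_of_hasDerivAt_le_neg {a b m : ℝ} {Φ Φ' g : ℝ → ℝ}
    (hΦ : ContinuousOn Φ (Ico a b)) (hderiv : ∀ t ∈ Ioo a b, HasDerivAt Φ (Φ' t) t)
    (hle : ∀ t ∈ Ioo a b, Φ' t ≤ -g t) (hm : ∀ t ∈ Ico a b, m ≤ Φ t)
    (hg : ContinuousOn g (Ico a b)) (hg0 : ∀ t ∈ Ico a b, 0 ≤ g t) :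
    IntegrableOn g (Ioc a b) := by
  rcases le_or_gt b a with hba | hab
  · simp [Ioc_eq_empty_of_le hba]
  obtain ⟨u, -, hu, hlim⟩ := exists_seq_strictMono_tendsto' hab
  have hsub : ∀ i, Icc a (u i) ⊆ Ico a b := fun i => Icc_subset_Ico_right (hu i).2
  have hgi : ∀ i, IntegrableOn g (Icc a (u i)) := fun i => (hg.mono (hsub i)).integrableOn_Icc
  refine integrableOn_Ioc_of_intervalIntegral_norm_bounded_right (I := Φ a - m)
    (fun i => (hgi i).mono_set Ioc_subset_Icc_self) hlim (Eventually.of_forall fun i => ?_)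
  have hsub' : ∀ x ∈ Ioo a (u i), x ∈ Ioo a b := fun x hx => ⟨hx.1, hx.2.trans (hu i).2⟩
  have hftc : ∫ x in a..u i, g x ≤ -Φ (u i) - -Φ a :=
    intervalIntegral.integral_le_sub_of_hasDeriv_right_of_le (hu i).1.le (hΦ.mono (hsub i)).neg
      (fun x hx => (hderiv x (hsub' x hx)).neg.hasDerivWithinAt) (hgi i)
      fun x hx => le_neg.mpr (hle x (hsub' x hx))
  rw [intervalIntegral.integral_of_le (hu i).1.le] at hftc
  rw [setIntegral_congr_fun measurableSet_Ioc fun x hx =>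
    Real.norm_of_nonneg (hg0 x (hsub i (Ioc_subset_Icc_self hx)))]
  linarith [hm (u i) (hsub i (right_mem_Icc.mpr (hu i).1.le))]

section FlowEstimates

variable {E : Type*} [NormedAddCommGroup E] [InnerProductSpace ℝ E] (T : E →L[ℝ] E)
  {x v : E} {h α δ M m c : ℝ}

theorem rpow_one_sub_add_eq_mul {r : ℝ} (hr : 0 < r) (α δ : ℝ) :
    r ^ (1 - α + δ) = r * r ^ (δ - α) := by
  rw [show 1 - α + δ = 1 + (δ - α) by ring, rpow_add hr, rpow_one]

theorem inner_rayleighResidual_div_norm_le (hx : x ≠ 0) (hv : ‖v‖ ≤ M * ‖x‖ ^ (1 - α + δ)) :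
    2 * ⟪T.rayleighResidual (‖x‖⁻¹ • x), v⟫ / ‖x‖ ≤ 4 * ‖T‖ * M * ‖x‖ ^ (δ - α) := by
  have hr : 0 < ‖x‖ := norm_pos_iff.mpr hx
  have hres : ‖T.rayleighResidual (‖x‖⁻¹ • x)‖ ≤ 2 * ‖T‖ := by
    simpa [norm_smul, hr.ne'] using T.norm_rayleighResidual_le (‖x‖⁻¹ • x)
  rw [div_le_iff₀ hr]
  calc 2 * ⟪T.rayleighResidual (‖x‖⁻¹ • x), v⟫
      ≤ 2 * (‖T.rayleighResidual (‖x‖⁻¹ • x)‖ * ‖v‖) := by gcongr; exact real_inner_le_norm _ _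
    _ ≤ 2 * (2 * ‖T‖ * (M * ‖x‖ ^ (1 - α + δ))) := by gcongr
    _ = 4 * ‖T‖ * M * ‖x‖ ^ (δ - α) * ‖x‖ := by rw [rpow_one_sub_add_eq_mul hr]; ring

theorem flow_deriv_norm_rpow_le (hx : x ≠ 0) (hδ : 0 ≤ δ) (hm : 0 ≤ m) (hc : 0 ≤ c)
    (hh : m * ‖x‖ ^ (-α) ≤ h) (hR : c ≤ T.rayleighQuotient x)
    (hv : ‖v‖ ≤ M * ‖x‖ ^ (1 - α + δ)) (hsmall : M * ‖x‖ ^ δ ≤ m * c / 2) :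
    δ * ‖x‖ ^ (δ - 2) * ⟪x, -h • T x + v⟫ ≤ -(δ * (m * c) / 2 * ‖x‖ ^ (δ - α)) := by
  have hr : 0 < ‖x‖ := norm_pos_iff.mpr hx
  have hquad : ⟪x, T x⟫ = T.rayleighQuotient x * ‖x‖ ^ 2 := by
    rw [T.rayleighQuotient_eq_inner, real_inner_comm]; field_simp
  have hdrift : m * c * ‖x‖ ^ (-α) ≤ h * T.rayleighQuotient x := by
    rw [mul_right_comm]
    exact mul_le_mul hh hR hc ((mul_nonneg hm (rpow_nonneg hr.le _)).trans hh)
  have hforce : ⟪x, v⟫ ≤ M * ‖x‖ ^ δ * ‖x‖ ^ (-α) * ‖x‖ ^ 2 := by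
    calc ⟪x, v⟫ ≤ ‖x‖ * ‖v‖ := real_inner_le_norm _ _
      _ ≤ ‖x‖ * (M * ‖x‖ ^ (1 - α + δ)) := by gcongr
      _ = M * ‖x‖ ^ δ * ‖x‖ ^ (-α) * ‖x‖ ^ 2 := by
        rw [rpow_one_sub_add_eq_mul hr, rpow_sub hr, rpow_neg hr.le]; ring
  have hflow : ⟪x, -h • T x + v⟫ ≤ -(m * c / 2 * ‖x‖ ^ (-α) * ‖x‖ ^ 2) := by
    rw [inner_add_right, real_inner_smul_right, hquad]
    have := mul_le_mul_of_nonneg_right hsmall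
      (mul_nonneg (rpow_nonneg hr.le (-α)) (sq_nonneg ‖x‖))
    nlinarith [mul_le_mul_of_nonneg_right hdrift (sq_nonneg ‖x‖)]
  calc δ * ‖x‖ ^ (δ - 2) * ⟪x, -h • T x + v⟫
      ≤ δ * ‖x‖ ^ (δ - 2) * -(m * c / 2 * ‖x‖ ^ (-α) * ‖x‖ ^ 2) := by gcongr
    _ = -(δ * (m * c) / 2 * ‖x‖ ^ (δ - α)) := by
      rw [rpow_sub hr, rpow_sub hr, rpow_neg hr.le, rpow_two]; field_simp

end FlowEstimates

section Flow

variable {E : Type*} [NormedAddCommGroup E] [InnerProductSpace ℝ E] {T : E →L[ℝ] E}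
  {H : E → ℝ} {y f : ℝ → E} {a b α δ M : ℝ}

theorem continuousOn_mul_norm_rayleighResidual_sq (hHc : ContinuousOn H {0}ᶜ) :
    ContinuousOn (fun x => H x * ‖T.rayleighResidual (‖x‖⁻¹ • x)‖ ^ 2) {0}ᶜ := by
  have hnorm : ∀ x ∈ ({0}ᶜ : Set E), ‖x‖ ≠ 0 := fun _ hx => norm_ne_zero_iff.mpr hx
  refine hHc.mul ((T.continuousOn_rayleighResidual.comp ?_ ?_).norm.pow 2)
  · exact (continuous_norm.continuousOn.inv₀ hnorm).smul continuousOn_id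
  · exact fun x hx => smul_ne_zero (inv_ne_zero (hnorm x hx)) hx

theorem integrableOn_Ioc_of_flow_of_small {m c : ℝ} (hT : (T : E →ₗ[ℝ] E).IsSymmetric)
    (hδ : 0 < δ) (hM : 0 ≤ M) (hm : 0 < m) (hc : 0 < c)
    (hR : ∀ x : E, x ≠ 0 → c ≤ T.rayleighQuotient x)
    (hH : ∀ x : E, x ≠ 0 → m * ‖x‖ ^ (-α) ≤ H x) (hHc : ContinuousOn H {0}ᶜ)
    (hycont : ContinuousOn y (Ico a b)) (hyne : ∀ t ∈ Ico a b, y t ≠ 0)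
    (hode : ∀ t ∈ Ioo a b, HasDerivAt y (-(H (y t)) • T (y t) + f t) t)
    (hfb : ∀ t ∈ Ioo a b, ‖f t‖ ≤ M * ‖y t‖ ^ (1 - α + δ))
    (hsmall : ∀ t ∈ Ioo a b, M * ‖y t‖ ^ δ ≤ m * c / 2) :
    IntegrableOn (fun t => H (y t) * ‖T.rayleighResidual (‖y t‖⁻¹ • y t)‖ ^ 2) (Ioc a b) := by
  have hHnonneg : ∀ t ∈ Ico a b, 0 ≤ H (y t) := fun t ht =>
    (mul_nonneg hm.le (rpow_nonneg (norm_nonneg _) _)).trans (hH _ (hyne t ht))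
  obtain ⟨K, hK, hKδ⟩ : ∃ K, 0 ≤ K ∧ K * (δ * (m * c) / 2) = 4 * ‖T‖ * M :=
    ⟨8 * ‖T‖ * M / (δ * (m * c)), by positivity, by field_simp; ring⟩
  have hderiv (t : ℝ) (ht : t ∈ Ioo a b) :=
    (hasDerivAt_rayleighQuotient_of_flow hT (hode t ht) (hyne t (Ioo_subset_Ico_self ht))).add
      (((hode t ht).norm_rpow (hyne t (Ioo_subset_Ico_self ht)) δ).const_mul K)
  refine integrableOn_Ioc_of_hasDerivAt_le_neg (m := -‖T‖) ?cont hderiv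
    (fun t ht => ?le) (fun t ht => ?lower)
    ((continuousOn_mul_norm_rayleighResidual_sq hHc).comp hycont hyne)
    (fun t ht => mul_nonneg (hHnonneg t ht) (sq_nonneg _))
  case cont =>
    refine (T.continuousOn_rayleighQuotient.comp hycont hyne).add
      (continuousOn_const.mul (hycont.norm.rpow_const fun t ht => Or.inl ?_))
    exact norm_ne_zero_iff.mpr (hyne t ht)
  case le =>
    have hy0 := hyne t (Ioo_subset_Ico_self ht)
    have hforce := inner_rayleighResidual_div_norm_le T hy0 (hfb t ht)
    have hdecay := mul_le_mul_of_nonneg_left (flow_deriv_norm_rpow_le T hy0 hδ.le hm.le hc.le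
      (hH _ hy0) (hR _ hy0) (hfb t ht) (hsmall t ht)) hK
    rw [mul_neg, ← mul_assoc K (δ * (m * c) / 2), hKδ] at hdecay
    have := mul_nonneg (hHnonneg t (Ioo_subset_Ico_self ht))
      (sq_nonneg ‖T.rayleighResidual (‖y t‖⁻¹ • y t)‖)
    linarith
  case lower =>
    show -‖T‖ ≤ T.rayleighQuotient (y t) + K * ‖y t‖ ^ δ
    have := abs_le.mp (T.rayleighQuotient_le_norm (y t))
    have : 0 ≤ K * ‖y t‖ ^ δ := mul_nonneg hK (rpow_nonneg (norm_nonneg _) _)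
    linarith

theorem integrableOn_rayleighResidual_of_flow [ProperSpace E]
    (hδ : 0 < δ) (hM : 0 ≤ M) (hab : a < b)
    (hT : (T : E →ₗ[ℝ] E).IsSymmetric) (hTpos : ∀ x : E, x ≠ 0 → 0 < ⟪x, T x⟫)
    (hHhom : ∀ x : E, x ≠ 0 → ∀ s : ℝ, 0 < s → H (s • x) = s ^ (-α) * H x)
    (hHpos : ∀ x : E, ‖x‖ = 1 → 0 < H x) (hHcont : ContinuousOn H (Metric.sphere 0 1))
    (hycont : ContinuousOn y (Ico a b)) (hyne : ∀ t ∈ Ico a b, y t ≠ 0)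
    (hylim : Tendsto y (𝓝[<] b) (𝓝 0))
    (hode : ∀ t ∈ Ioo a b, HasDerivAt y (-(H (y t)) • T (y t) + f t) t)
    (hfb : ∀ t ∈ Ico a b, ‖f t‖ ≤ M * ‖y t‖ ^ (1 - α + δ)) :
    IntegrableOn (fun t => H (y t) * ‖T.rayleighResidual (‖y t‖⁻¹ • y t)‖ ^ 2) (Ioo a b) := by
  obtain ⟨m, hm, hH⟩ := exists_pos_mul_norm_rpow_le_of_homogeneous hHhom hHpos hHcont
  obtain ⟨c, hc, hR⟩ := exists_pos_mul_norm_rpow_le_of_homogeneous (p := 0)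
    (fun x _ s hs => by rw [rpow_zero, one_mul]; exact T.rayleigh_smul x hs.ne')
    (fun x hx => by
      rw [T.rayleighQuotient_eq_inner, hx, one_pow, div_one, real_inner_comm]
      exact hTpos x (norm_ne_zero_iff.mp (hx ▸ one_ne_zero)))
    (T.continuousOn_rayleighQuotient.mono fun _ hx => Metric.ne_of_mem_sphere hx one_ne_zero)
  simp only [rpow_zero, mul_one] at hR
  have hsmall : ∀ᶠ t in 𝓝[<] b, M * ‖y t‖ ^ δ ≤ m * c / 2 := by
    have : Tendsto (fun t => M * ‖y t‖ ^ δ) (𝓝[<] b) (𝓝 0) := by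
      simpa [zero_rpow hδ.ne'] using (hylim.norm.rpow_const (Or.inr hδ.le)).const_mul M
    exact this.eventually (ge_mem_nhds (by positivity))
  obtain ⟨l, hlb, hl⟩ := mem_nhdsLT_iff_exists_Ico_subset.mp hsmall
  have ht₁ : max a l < b := max_lt hab hlb
  have hHc := continuousOn_compl_zero_of_homogeneous hHhom hHcont
  have hhead : Icc a (max a l) ⊆ Ico a b := Icc_subset_Ico_right ht₁
  have htail : Ico (max a l) b ⊆ Ico a b := Ico_subset_Ico_left (le_max_left a l)
  refine IntegrableOn.mono_set (IntegrableOn.union ?_ ?_)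
    (Ioo_subset_Ioc_self.trans (Ioc_subset_Ioc_union_Ioc (b := max a l)))
  · exact (((continuousOn_mul_norm_rayleighResidual_sq hHc).comp (hycont.mono hhead)
      fun t ht => hyne t (hhead ht)).integrableOn_Icc).mono_set Ioc_subset_Icc_self
  · exact integrableOn_Ioc_of_flow_of_small hT hδ hM hm hc hR hH hHc (hycont.mono htail)
      (fun t ht => hyne t (htail ht))
      (fun t ht => hode t (Ioo_subset_Ioo_left (le_max_left a l) ht))
      (fun t ht => hfb t (htail (Ioo_subset_Ico_self ht)))
      fun t ht => hl (Ico_subset_Ico_left (le_max_right a l) (Ioo_subset_Ico_self ht))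

end Flow

theorem finite_weighted_deficiency_integral_general (n : ℕ)
    (α δ M t₀ T' : ℝ) (hδ : 0 < δ) (hM : 0 < M)
    (hT' : t₀ < T')
    (A : Matrix (Fin n) (Fin n) ℝ) (hAsymm : A.IsSymm)
    (hApos : ∀ x : EuclideanSpace ℝ (Fin n), x ≠ 0 → 0 < (inner ℝ x (mulVecE A x) : ℝ))
    (H : EuclideanSpace ℝ (Fin n) → ℝ)
    (hHhom : ∀ x : EuclideanSpace ℝ (Fin n), x ≠ 0 → ∀ s : ℝ, 0 < s →
      H (s • x) = s ^ (-α) * H x)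
    (hHpos : ∀ x : EuclideanSpace ℝ (Fin n), ‖x‖ = 1 → 0 < H x)
    (hHcont : ContinuousOn H (Metric.sphere (0 : EuclideanSpace ℝ (Fin n)) 1))
    (y f : ℝ → EuclideanSpace ℝ (Fin n))
    (hycont : ContinuousOn y (Ico t₀ T'))
    (hyne : ∀ t ∈ Ico t₀ T', y t ≠ 0)
    (hylim : Tendsto y (𝓝[<] T') (𝓝 0))
    (hode : ∀ t ∈ Ioo t₀ T', HasDerivAt y (-(H (y t)) • mulVecE A (y t) + f t) t)
    (hfb : ∀ t ∈ Ico t₀ T', ‖f t‖ ≤ M * ‖y t‖ ^ (1 - α + δ))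
    :
    IntegrableOn
      (fun τ => H (y τ) *
        ‖mulVecE A (‖y τ‖⁻¹ • y τ) - ((inner ℝ (y τ) (mulVecE A (y τ)) : ℝ) / ‖y τ‖ ^ 2) • (‖y τ‖⁻¹ • y τ)‖ ^ 2)
      (Ioo t₀ T') volume := by
  let T := Matrix.toEuclideanCLM (n := Fin n) (𝕜 := ℝ) A
  have hT : (T : EuclideanSpace ℝ (Fin n) →ₗ[ℝ] _).IsSymmetric :=
    Matrix.isSymmetric_toEuclideanLin_iff.mpr (Matrix.isHermitian_iff_isSymm.mpr hAsymm)
  have hquot (x : EuclideanSpace ℝ (Fin n)) :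
      ⟪x, T x⟫ / ‖x‖ ^ 2 = T.rayleighQuotient (‖x‖⁻¹ • x) := by
    rw [T.rayleighQuotient_inv_norm_smul, T.rayleighQuotient_eq_inner, real_inner_comm]
  simp only [show ∀ x, mulVecE A x = T x from fun _ => rfl, hquot]
  exact integrableOn_rayleighResidual_of_flow hδ hM.le hT' hT hApos hHhom hHpos hHcont hycont
    hyne hylim hode hfb

theorem finite_weighted_deficiency_integral (n : ℕ) (hn : 1 ≤ n)
    (α δ M t₀ T' : ℝ) (hα : 0 < α) (hδ : 0 < δ) (hM : 0 < M)
    (ht₀ : 0 ≤ t₀) (hT' : t₀ < T')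
    (A : Matrix (Fin n) (Fin n) ℝ) (hAsymm : A.IsSymm)
    (hApos : ∀ x : EuclideanSpace ℝ (Fin n), x ≠ 0 → 0 < (inner ℝ x (mulVecE A x) : ℝ))
    (H : EuclideanSpace ℝ (Fin n) → ℝ)
    (hHhom : ∀ x : EuclideanSpace ℝ (Fin n), x ≠ 0 → ∀ s : ℝ, 0 < s →
      H (s • x) = s ^ (-α) * H x)
    (hHpos : ∀ x : EuclideanSpace ℝ (Fin n), ‖x‖ = 1 → 0 < H x)
    (hHcont : ContinuousOn H (Metric.sphere (0 : EuclideanSpace ℝ (Fin n)) 1))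
    (y f : ℝ → EuclideanSpace ℝ (Fin n))
    (hycont : ContinuousOn y (Ico t₀ T'))
    (hyne : ∀ t ∈ Ico t₀ T', y t ≠ 0)
    (hylim : Tendsto y (𝓝[<] T') (𝓝 0))
    (hode : ∀ t ∈ Ioo t₀ T', HasDerivAt y (-(H (y t)) • mulVecE A (y t) + f t) t)
    (hfcont : ContinuousOn f (Ico t₀ T'))
    (hfb : ∀ t ∈ Ico t₀ T', ‖f t‖ ≤ M * ‖y t‖ ^ (1 - α + δ))
    :
    IntegrableOn
      (fun τ => H (y τ) *
        ‖mulVecE A (‖y τ‖⁻¹ • y τ) - ((inner ℝ (y τ) (mulVecE A (y τ)) : ℝ) / ‖y τ‖ ^ 2) • (‖y τ‖⁻¹ • y τ)‖ ^ 2)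
      (Ioo t₀ T') volume :=
  finite_weighted_deficiency_integral_general n α δ M t₀ T' hδ hM hT' A hAsymm hApos H hHhom hHpos
    hHcont y f hycont hyne hylim hode hfb
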